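/- For every graph G and d ∈ ℕ, the subchromatic number of G^d is at most wcol_{2d}(G): χ_sub(G^d) ≤ wcol_{2d}(G). -/

import Mathlib

open SimpleGraph Set

variable {V : Type*}

/-- The `d`-th power of a graph: distinct vertices adjacent iff joined by a walk
of length at most `d`. -/
def gpow (G : SimpleGraph V) (d : ℕ) : SimpleGraph V where
  Adj u v := u ≠ v ∧ ∃ p : G.Walk u v, p.length ≤ d
  symm := by
    constructor
    rintro u v ⟨h, p, hp⟩
    exact ⟨h.symm, p.reverse, by simpa using hp⟩
  loopless := by constructor; rintro u ⟨h, _⟩; exact h rfl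

/-- `v` is weakly `r`-reachable from `u` with respect to the ordering `σ`:
there is a path (walk) of length at most `r` from `u` to `v` all of whose
vertices are `≥_σ v`. -/
def wreach (G : SimpleGraph V) (σ : V → ℕ) (r : ℕ) (u v : V) : Prop :=
  ∃ p : G.Walk u v, p.length ≤ r ∧ ∀ x ∈ p.support, σ v ≤ σ x

/-- The weak `r`-coloring number of the ordering `σ`. -/
noncomputable def wcolOrd (G : SimpleGraph V) (σ : V → ℕ) (r : ℕ) : ℕ :=
  sSup { n | ∃ u, n = {v | wreach G σ r u v}.ncard }

/-- The weak `r`-coloring number of `G`: minimum over (injective) vertex orderings. -/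
noncomputable def wcol (G : SimpleGraph V) (r : ℕ) : ℕ :=
  sInf { c | ∃ σ : V → ℕ, Function.Injective σ ∧ wcolOrd G σ r = c }

/-- The coloring number of the ordering `σ`: max over vertices of one plus
the number of earlier neighbors. -/
noncomputable def colOrd (G : SimpleGraph V) (σ : V → ℕ) : ℕ :=
  sSup { n | ∃ u, n = 1 + {v | G.Adj u v ∧ σ v < σ u}.ncard }

/-- The coloring number of `G` (one plus degeneracy). -/
noncomputable def colNum (G : SimpleGraph V) : ℕ :=
  sInf { c | ∃ σ : V → ℕ, Function.Injective σ ∧ colOrd G σ = c }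

/-- Maximum degree. -/
noncomputable def maxDeg (G : SimpleGraph V) : ℕ :=
  sSup { n | ∃ u, n = (G.neighborSet u).ncard }

/-- Clique number. -/
noncomputable def cliqueNum' (G : SimpleGraph V) : ℕ :=
  sSup { n | ∃ s : Finset V, G.IsNClique n s }

/-- A clustering of `H`: a partition of the vertex set into cliques. -/
def IsClustering (H : SimpleGraph V) (𝒳 : Set (Set V)) : Prop :=
  Setoid.IsPartition 𝒳 ∧ ∀ A ∈ 𝒳, H.IsClique A

/-- The quotient graph `H/𝒳`: blocks are vertices, distinct blocks adjacent iff some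
pair of their elements is adjacent in `H`. -/
def quotGraph (H : SimpleGraph V) (𝒳 : Set (Set V)) : SimpleGraph 𝒳 where
  Adj A B := A ≠ B ∧ ∃ a ∈ (A : Set V), ∃ b ∈ (B : Set V), H.Adj a b
  symm := by
    constructor
    rintro A B ⟨hne, a, ha, b, hb, hab⟩
    exact ⟨hne.symm, b, hb, a, ha, hab.symm⟩
  loopless := by constructor; rintro A ⟨h, _⟩; exact h rfl

/-- `S` induces a disjoint union of complete graphs in `H`
(adjacency is transitive on `S`). -/
def IsClusterSet (H : SimpleGraph V) (S : Set V) : Prop :=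
  ∀ a ∈ S, ∀ b ∈ S, ∀ c ∈ S, H.Adj a b → H.Adj b c → a ≠ c → H.Adj a c

/-- The subchromatic number: least `c` admitting a `c`-coloring in which every color
class induces a disjoint union of complete graphs. -/
noncomputable def subchrom (H : SimpleGraph V) : ℕ :=
  sInf { c | ∃ f : V → Fin c, ∀ i, IsClusterSet H (f ⁻¹' {i}) }

/-- A semi-ladder of length `k`: `x i` non-adjacent to `y i`, while `x i` adjacent
to `y j` whenever `i < j`. -/
def IsSemiLadder (H : SimpleGraph V) {k : ℕ} (x y : Fin k → V) : Prop :=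
  (∀ i, ¬ H.Adj (x i) (y i)) ∧ ∀ i j, i < j → H.Adj (x i) (y j)

/-- The semi-ladder index of `H` is at most `q`. -/
def semiLadderIndexLE (H : SimpleGraph V) (q : ℕ) : Prop :=
  ∀ (k : ℕ) (x y : Fin k → V), IsSemiLadder H x y → k ≤ q

/-- Closed neighborhood. -/
def closedNbhd (H : SimpleGraph V) (a : V) : Set V := insert a (H.neighborSet a)

/-- Treedepth at most `k`, via a forest (ancestor) order: a strict partial order in
which ancestors of each vertex form a chain of size `< k`, and every edge joins a
comparable pair. -/
def treedepthLE (G : SimpleGraph V) (k : ℕ) : Prop :=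
  ∃ A : V → V → Prop,
    (∀ u v w, A u v → A v w → A u w) ∧ (∀ v, ¬ A v v) ∧
    (∀ a b v, A a v → A b v → a = b ∨ A a b ∨ A b a) ∧
    (∀ u v, G.Adj u v → A u v ∨ A v u) ∧
    (∀ v, {a | A a v}.ncard < k)

/-! Fix an ordering `σ` attaining `wcol G (2 * d)` and send every vertex `x` to its anchor, the
`σ`-least vertex within distance `d / 2` of `x`; vertices with a common anchor are within distance
`d` of each other. If `x` and `y` are within distance `d`, then the `σ`-smaller of their anchors
is weakly `2d`-reachable from the other one: walk from one anchor to `x`, on to `y` and to the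
other anchor; every vertex on the way is within `d / 2` of `x` or of `y`, hence not `σ`-below
the smaller anchor. So on the graph joining the anchors of vertices at distance at most `d`,
every vertex has fewer than `wcol G (2 * d)` earlier neighbours and greedy colouring along `σ`
needs at most that many colours. Pulled back along the anchor map, a colour class contains
edges of `gpow G d` only between vertices with the same anchor, so adjacency is transitive on it. -/

open Function

theorem wreach_mono {G : SimpleGraph V} {σ : V → ℕ} {r r' : ℕ} {u v : V}
    (h : wreach G σ r u v) (hr : r ≤ r') :
    wreach G σ r' u v :=
  let ⟨p, hp, hσ⟩ := h
  ⟨p, hp.trans hr, hσ⟩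

namespace SimpleGraph

theorem colorable_of_ncard_earlier_neighbors_lt [Finite V] (H : SimpleGraph V) {σ : V → ℕ}
    (hσ : Injective σ) {K : ℕ} (hK : ∀ v, {u | H.Adj v u ∧ σ u < σ v}.ncard < K) :
    H.Colorable K := by
  classical
  have := Fintype.ofFinite V
  suffices ∀ s : Finset V, ∃ f : V → ℕ,
      (∀ v ∈ s, f v < K) ∧ ∀ u ∈ s, ∀ v ∈ s, H.Adj u v → f u ≠ f v by
    obtain ⟨f, hlt, hf⟩ := this Finset.univ
    exact ⟨Coloring.mk (fun v => ⟨f v, hlt v (Finset.mem_univ v)⟩) fun huv h =>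
      hf _ (Finset.mem_univ _) _ (Finset.mem_univ _) huv (congrArg Fin.val h)⟩
  intro s
  induction s using Finset.induction_on_max_value σ with
  | empty => exact ⟨0, by simp, by simp⟩
  | insert a s ha hmax ih =>
    obtain ⟨f, hlt, hf⟩ := ih
    have hearlier :
        ((s.filter (H.Adj a) : Finset V) : Set V) ⊆ {u | H.Adj a u ∧ σ u < σ a} := by
      intro u hu
      rw [Finset.coe_filter] at hu
      exact ⟨hu.2, (hmax u hu.1).lt_of_ne (hσ.ne (H.ne_of_adj hu.2).symm)⟩
    have hcard : ((s.filter (H.Adj a)).image f).card < (Finset.range K).card := by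
      calc _ ≤ (s.filter (H.Adj a)).card := Finset.card_image_le
        _ = ((s.filter (H.Adj a) : Finset V) : Set V).ncard := (Set.ncard_coe_finset _).symm
        _ ≤ _ := Set.ncard_le_ncard hearlier (Set.toFinite _)
        _ < K := hK a
        _ = _ := (Finset.card_range K).symm
    obtain ⟨c, hcK, hc⟩ := Finset.exists_mem_notMem_of_card_lt_card hcard
    have hfree : ∀ u ∈ s, H.Adj a u → c ≠ f u := fun u hu hau h =>
      hc (Finset.mem_image.2 ⟨u, Finset.mem_filter.2 ⟨hu, hau⟩, h.symm⟩)
    have hne : ∀ u ∈ s, u ≠ a := fun u hu h => ha (h ▸ hu)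
    refine ⟨update f a c, ?_, ?_⟩
    · simp only [Finset.forall_mem_insert, update_self]
      refine ⟨Finset.mem_range.1 hcK, fun v hv => ?_⟩
      rw [update_of_ne (hne v hv)]
      exact hlt v hv
    · simp only [Finset.forall_mem_insert]
      refine ⟨⟨fun haa => (haa.ne rfl).elim, fun v hv hav => ?_⟩,
        fun u hu => ⟨fun hua => ?_, fun v hv huv => ?_⟩⟩
      · rw [update_self, update_of_ne (hne v hv)]; exact hfree v hv hav
      · rw [update_self, update_of_ne (hne u hu)]; exact (hfree u hu hua.symm).symm
      · rw [update_of_ne (hne u hu), update_of_ne (hne v hv)]; exact hf u hu v hv huv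

variable (G : SimpleGraph V)

def walkBall (r : ℕ) (x : V) : Set V := {u | ∃ p : G.Walk x u, p.length ≤ r}

theorem mem_walkBall_self (r : ℕ) (x : V) : x ∈ G.walkBall r x := ⟨Walk.nil, Nat.zero_le r⟩

theorem mem_walkBall_or_mem_walkBall_of_mem_support {r : ℕ} {x y z : V} (w : G.Walk x y)
    (hw : w.length ≤ 2 * r + 1) (hz : z ∈ w.support) :
    z ∈ G.walkBall r x ∨ z ∈ G.walkBall r y := by
  classical
  have hsplit := congrArg Walk.length (w.take_spec hz)
  rw [Walk.length_append] at hsplit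
  by_cases hx : (w.takeUntil z hz).length ≤ r
  · exact Or.inl ⟨_, hx⟩
  · exact Or.inr ⟨(w.dropUntil z hz).reverse, by rw [Walk.length_reverse]; omega⟩

noncomputable def anchor (σ : V → ℕ) (r : ℕ) (x : V) : V :=
  argminOn σ (G.walkBall r x) ⟨x, G.mem_walkBall_self r x⟩

variable {G}

theorem anchor_mem_walkBall (σ : V → ℕ) (r : ℕ) (x : V) :
    G.anchor σ r x ∈ G.walkBall r x :=
  argminOn_mem _ _ _

theorem anchor_le {σ : V → ℕ} {r : ℕ} {x u : V} (hu : u ∈ G.walkBall r x) :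
    σ (G.anchor σ r x) ≤ σ u :=
  argminOn_le σ _ hu

theorem wreach_anchor_anchor {σ : V → ℕ} {r : ℕ} {x y : V} (w : G.Walk x y)
    (hw : w.length ≤ 2 * r + 1) (hσ : σ (G.anchor σ r y) ≤ σ (G.anchor σ r x)) :
    wreach G σ (r + w.length + r) (G.anchor σ r x) (G.anchor σ r y) := by
  obtain ⟨px, hpx⟩ := anchor_mem_walkBall (G := G) σ r x
  obtain ⟨py, hpy⟩ := anchor_mem_walkBall (G := G) σ r y
  classical
  refine ⟨(px.reverse.append w).append py, ?_, fun z hz => ?_⟩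
  · simp only [Walk.length_append, Walk.length_reverse]
    omega
  · have hx : z ∈ G.walkBall r x → σ (G.anchor σ r y) ≤ σ z :=
      fun h => hσ.trans (anchor_le h)
    simp only [Walk.mem_support_append_iff, Walk.support_reverse, List.mem_reverse] at hz
    rcases hz with (hz | hz) | hz
    · exact hx ⟨px.takeUntil z hz, (px.length_takeUntil_le_length hz).trans hpx⟩
    · exact (G.mem_walkBall_or_mem_walkBall_of_mem_support w hw hz).elim hx anchor_le
    · exact anchor_le ⟨py.takeUntil z hz, (py.length_takeUntil_le_length hz).trans hpy⟩

variable (G)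

def anchorConflict (σ : V → ℕ) (r d : ℕ) : SimpleGraph V where
  Adj m m' := m ≠ m' ∧
    ∃ x y, G.anchor σ r x = m ∧ G.anchor σ r y = m' ∧ ∃ p : G.Walk x y, p.length ≤ d
  symm := ⟨fun _ _ ⟨hne, x, y, hx, hy, p, hp⟩ =>
    ⟨hne.symm, y, x, hy, hx, p.reverse, by rwa [Walk.length_reverse]⟩⟩
  loopless := ⟨fun _ h => h.1 rfl⟩

variable {G}

theorem wreach_of_anchorConflict_adj {σ : V → ℕ} {r d : ℕ} (hd : d ≤ 2 * r + 1) {m m' : V}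
    (h : (G.anchorConflict σ r d).Adj m m') (hσ : σ m' ≤ σ m) :
    wreach G σ (2 * r + d) m m' := by
  obtain ⟨-, x, y, rfl, rfl, p, hp⟩ := h
  exact wreach_mono (wreach_anchor_anchor p (hp.trans hd) hσ) (by omega)

theorem ncard_earlier_anchorConflict_neighbors_lt [Finite V] {σ : V → ℕ} {r d R K : ℕ}
    (hd : d ≤ 2 * r + 1) (hR : 2 * r + d ≤ R) (hK : ∀ u, {v | wreach G σ R u v}.ncard ≤ K)
    (m : V) : {m' | (G.anchorConflict σ r d).Adj m m' ∧ σ m' < σ m}.ncard < K := by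
  have hsub : {m' | (G.anchorConflict σ r d).Adj m m' ∧ σ m' < σ m} ⊆
      {v | wreach G σ R m v} \ {m} := fun m' ⟨hadj, hlt⟩ =>
    ⟨wreach_mono (wreach_of_anchorConflict_adj hd hadj hlt.le) hR, hadj.ne.symm⟩
  have hm : m ∈ {v | wreach G σ R m v} := ⟨Walk.nil, Nat.zero_le R, fun z hz => by simp_all⟩
  calc _ ≤ ({v | wreach G σ R m v} \ {m}).ncard := Set.ncard_le_ncard hsub (Set.toFinite _)
    _ < {v | wreach G σ R m v}.ncard := Set.ncard_sdiff_singleton_lt_of_mem hm (Set.toFinite _)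
    _ ≤ K := hK m

theorem anchor_eq_of_coloring_eq {α : Type*} {σ : V → ℕ} {r d : ℕ}
    (c : (G.anchorConflict σ r d).Coloring α) {x y : V} (p : G.Walk x y) (hp : p.length ≤ d)
    (h : c (G.anchor σ r x) = c (G.anchor σ r y)) : G.anchor σ r x = G.anchor σ r y := by
  by_contra hne
  exact c.valid ⟨hne, x, y, rfl, rfl, p, hp⟩ h

theorem exists_walk_length_le_of_anchor_eq {σ : V → ℕ} {r : ℕ} {x y : V}
    (h : G.anchor σ r x = G.anchor σ r y) : ∃ p : G.Walk x y, p.length ≤ 2 * r := by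
  obtain ⟨px, hpx⟩ := anchor_mem_walkBall (G := G) σ r x
  obtain ⟨py, hpy⟩ := anchor_mem_walkBall (G := G) σ r y
  refine ⟨px.append (py.reverse.copy h.symm rfl), ?_⟩
  rw [Walk.length_append, Walk.length_copy, Walk.length_reverse]
  omega

end SimpleGraph

theorem isClusterSet_gpow_preimage_coloring_comp_anchor {α : Type*} {G : SimpleGraph V}
    {σ : V → ℕ} {d : ℕ} (c : (G.anchorConflict σ (d / 2) d).Coloring α) (i : α) :
    IsClusterSet (gpow G d) ((c ∘ G.anchor σ (d / 2)) ⁻¹' {i}) := by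
  intro a ha b hb e he ⟨_, pab, hab⟩ ⟨_, pbe, hbe⟩ hae
  simp only [Set.mem_preimage, Function.comp_apply, Set.mem_singleton_iff] at ha hb he
  have hab' := anchor_eq_of_coloring_eq c pab hab (ha.trans hb.symm)
  have hbe' := anchor_eq_of_coloring_eq c pbe hbe (hb.trans he.symm)
  obtain ⟨p, hp⟩ := exists_walk_length_le_of_anchor_eq (hab'.trans hbe')
  exact ⟨hae, p, hp.trans (Nat.mul_div_le d 2)⟩

theorem subchrom_gpow_le_of_ncard_wreach_le [Finite V] (G : SimpleGraph V) {σ : V → ℕ}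
    (hσ : Injective σ) {d K : ℕ} (hK : ∀ u, {v | wreach G σ (2 * d) u v}.ncard ≤ K) :
    subchrom (gpow G d) ≤ K := by
  obtain ⟨c⟩ := (G.anchorConflict σ (d / 2) d).colorable_of_ncard_earlier_neighbors_lt hσ
    (ncard_earlier_anchorConflict_neighbors_lt (by omega) (by omega) hK)
  exact Nat.sInf_le
    ⟨c ∘ G.anchor σ (d / 2), isClusterSet_gpow_preimage_coloring_comp_anchor c⟩

theorem ncard_wreach_le_wcolOrd [Finite V] (G : SimpleGraph V) (σ : V → ℕ) (r : ℕ) (u : V) :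
    {v | wreach G σ r u v}.ncard ≤ wcolOrd G σ r :=
  le_csSup ⟨Nat.card V, by rintro _ ⟨u, rfl⟩; exact Set.ncard_le_card _⟩ ⟨u, rfl⟩

theorem exists_injective_wcolOrd_eq_wcol [Countable V] (G : SimpleGraph V) (r : ℕ) :
    ∃ σ : V → ℕ, Injective σ ∧ wcolOrd G σ r = wcol G r :=
  let ⟨σ, hσ⟩ := exists_injective_nat V
  Nat.sInf_mem (s := {c | ∃ σ : V → ℕ, Injective σ ∧ wcolOrd G σ r = c})
    ⟨_, σ, hσ, rfl⟩

/-- χ_sub(G^d) ≤ wcol_{2d}(G). -/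
theorem stmt5 [Fintype V] (G : SimpleGraph V) (d : ℕ) :
    subchrom (gpow G d) ≤ wcol G (2 * d) := by
  obtain ⟨σ, hσ, hwcol⟩ := exists_injective_wcolOrd_eq_wcol G (2 * d)
  exact hwcol ▸ subchrom_gpow_le_of_ncard_wreach_le G hσ (ncard_wreach_le_wcolOrd G σ (2 * d))
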